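/- arXiv:2108.09100 — 2 statements merged into one kernel-verified Lean document; each statement's English description precedes it below -/
import Mathlib

section
/- For every δ ∈ (0, 1/2] and every f: {0,1}^n → {0,1}, there exists a probability distribution p on {0,1}^n satisfying the Santha-Vazirani condition with bias δ (each conditional bit probability lies in [1/2−δ, 1/2+δ]) such that Pr_p[f(X)=1] ≥ 1/2 + δ or Pr_p[f(X)=1] ≤ 1/2 − δ; in particular, no deterministic function f: {0,1}^n → {0,1} extracts a uniform bit from every Santha-Vazirani source with bias δ > 0. -/
open Finset

namespace SVX

variable {n : ℕ}

/-- The set of strings agreeing with `x` on coordinates `< i`. -/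
def Pref (x : Fin n → Bool) (i : ℕ) : Finset (Fin n → Bool) :=
  univ.filter (fun y => ∀ j : Fin n, (j : ℕ) < i → y j = x j)

/-- Real-valued count of extensions with `f = true`. -/
noncomputable def Nr (f : (Fin n → Bool) → Bool) (x : Fin n → Bool) (i : ℕ) : ℝ :=
  ∑ y ∈ Pref x i, (if f y = true then (1:ℝ) else 0)

/-- Greedy bit: the child with more `f = true` extensions. -/
noncomputable def gb (f : (Fin n → Bool) → Bool) (x : Fin n → Bool) (i : Fin n) : Bool :=
  if Nr f (Function.update x i false) ((i:ℕ)+1) ≤ Nr f (Function.update x i true) ((i:ℕ)+1)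
  then true else false

noncomputable def cw (δ : ℝ) (f : (Fin n → Bool) → Bool) (x : Fin n → Bool) (i : Fin n) : ℝ :=
  if x i = gb f x i then 1/2 + δ else 1/2 - δ

noncomputable def pw (δ : ℝ) (f : (Fin n → Bool) → Bool) (x : Fin n → Bool) : ℝ :=
  ∏ i, cw δ f x i

noncomputable def PP (δ : ℝ) (f : (Fin n → Bool) → Bool) (x : Fin n → Bool) (i : ℕ) : ℝ :=
  ∑ y ∈ Pref x i, pw δ f y

noncomputable def FF (δ : ℝ) (f : (Fin n → Bool) → Bool) (x : Fin n → Bool) (i : ℕ) : ℝ :=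
  ∑ y ∈ Pref x i, (if f y = true then pw δ f y else 0)

lemma Pref_zero (x : Fin n → Bool) : Pref x 0 = univ := by
  simp [Pref]

lemma Pref_top (x : Fin n → Bool) : Pref x n = {x} := by
  ext y
  simp only [Pref, mem_filter, mem_univ, true_and, mem_singleton]
  constructor
  · intro h; funext j; exact h j j.isLt
  · intro h j _; rw [h]

lemma Pref_congr {x y : Fin n → Bool} {i : ℕ} (h : ∀ j : Fin n, (j:ℕ) < i → x j = y j) :
    Pref x i = Pref y i := by
  ext z
  simp only [Pref, mem_filter, mem_univ, true_and]
  constructor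
  · intro hz j hj; rw [hz j hj, h j hj]
  · intro hz j hj; rw [hz j hj, ← h j hj]

lemma filter_pref_eq (x : Fin n → Bool) (i : Fin n) (b : Bool) :
    (Pref x (i:ℕ)).filter (fun y => y i = b) = Pref (Function.update x i b) ((i:ℕ)+1) := by
  ext y
  simp only [Pref, mem_filter, mem_univ, true_and]
  constructor
  · rintro ⟨h1, h2⟩ j hj
    rcases Nat.lt_succ_iff_lt_or_eq.mp hj with hj' | hj'
    · have hne : j ≠ i := fun hc => by subst hc; omega
      rw [h1 j hj', Function.update_of_ne hne]
    · have : j = i := Fin.ext hj'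
      subst this; rw [h2, Function.update_self]
  · intro h
    constructor
    · intro j hj
      have := h j (Nat.lt_succ_of_lt hj)
      rwa [Function.update_of_ne (fun hc => by subst hc; omega)] at this
    · have := h i (Nat.lt_succ_self _)
      rwa [Function.update_self] at this

lemma sum_pref_split (x : Fin n → Bool) (i : Fin n) (g : (Fin n → Bool) → ℝ) :
    ∑ y ∈ Pref x (i:ℕ), g y
      = (∑ y ∈ Pref (Function.update x i true) ((i:ℕ)+1), g y)
        + ∑ y ∈ Pref (Function.update x i false) ((i:ℕ)+1), g y := by
  rw [← filter_pref_eq x i true, ← filter_pref_eq x i false]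
  rw [← sum_filter_add_sum_filter_not (Pref x (i:ℕ)) (fun y => y i = true) g]
  congr 1
  apply sum_congr _ (fun _ _ => rfl)
  ext y; simp


lemma gb_congr (f : (Fin n → Bool) → Bool) {x y : Fin n → Bool} {j : Fin n}
    (h : ∀ k : Fin n, (k:ℕ) < (j:ℕ) → x k = y k) : gb f x j = gb f y j := by
  have h2 : ∀ c, Pref (Function.update x j c) ((j:ℕ)+1)
      = Pref (Function.update y j c) ((j:ℕ)+1) := by
    intro c; apply Pref_congr; intro k hk
    rcases Nat.lt_succ_iff_lt_or_eq.mp hk with hk | hk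
    · have hne : k ≠ j := fun hc => by subst hc; omega
      rw [Function.update_of_ne hne, Function.update_of_ne hne]; exact h k hk
    · have : k = j := Fin.ext hk; subst this; simp
  simp only [gb, Nr, h2]
  congr

lemma gb_update (f : (Fin n → Bool) → Bool) (x : Fin n → Bool) (i : Fin n) (b : Bool) :
    gb f (Function.update x i b) i = gb f x i := by
  apply gb_congr
  intro k hk
  exact Function.update_of_ne (fun hc => by subst hc; omega) _ _

lemma cw_congr (δ : ℝ) (f : (Fin n → Bool) → Bool) {x y : Fin n → Bool} {j : Fin n}
    (h : ∀ k : Fin n, (k:ℕ) ≤ (j:ℕ) → x k = y k) : cw δ f x j = cw δ f y j := by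
  unfold cw
  rw [gb_congr f (fun k hk => h k (le_of_lt hk)), h j le_rfl]

lemma cw_update_sum (δ : ℝ) (f : (Fin n → Bool) → Bool) (x : Fin n → Bool) (i : Fin n) :
    cw δ f (Function.update x i true) i + cw δ f (Function.update x i false) i = 1 := by
  unfold cw
  rw [gb_update, gb_update, Function.update_self, Function.update_self]
  cases hg : gb f x i <;> simp <;> ring

lemma filter_lt_succ (i : ℕ) (hi : i < n) :
    (univ.filter (fun j : Fin n => (j:ℕ) < i+1))
      = insert (⟨i, hi⟩ : Fin n) (univ.filter (fun j : Fin n => (j:ℕ) < i)) := by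
  ext k
  simp only [mem_filter, mem_univ, true_and, mem_insert]
  constructor
  · intro hk
    rcases Nat.lt_succ_iff_lt_or_eq.mp hk with hk | hk
    · right; exact hk
    · left; exact Fin.ext hk
  · rintro (rfl | hk)
    · exact Nat.lt_succ_self _
    · exact Nat.lt_succ_of_lt hk

lemma PP_eq_prod (δ : ℝ) (f : (Fin n → Bool) → Bool) :
    ∀ d (x : Fin n → Bool) (i : ℕ), i + d = n →
      PP δ f x i = ∏ j ∈ univ.filter (fun j : Fin n => (j:ℕ) < i), cw δ f x j := by
  intro d
  induction d with
  | zero =>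
      intro x i hi
      have hie : i = n := by omega
      have hfil : (univ.filter (fun j : Fin n => (j:ℕ) < n)) = (univ : Finset (Fin n)) := by
        ext k; simpa using k.isLt
      rw [hie, hfil]
      show (∑ y ∈ Pref x n, pw δ f y) = _
      rw [Pref_top, sum_singleton]
      rfl
  | succ d ih =>
      intro x i hi
      have hi' : i < n := by omega
      set i' : Fin n := ⟨i, hi'⟩ with hi'def
      have hiv : (i' : ℕ) = i := rfl
      have hsplit := sum_pref_split x i' (pw δ f)
      rw [hiv] at hsplit
      have h1 := ih (Function.update x i' true) (i+1) (by omega)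
      have h0 := ih (Function.update x i' false) (i+1) (by omega)
      have hins := filter_lt_succ (n := n) i hi'
      have hnm : i' ∉ univ.filter (fun j : Fin n => (j:ℕ) < i) := by
        simp [hi'def]
      have hprodcongr : ∀ b : Bool,
          (∏ j ∈ univ.filter (fun j : Fin n => (j:ℕ) < i), cw δ f (Function.update x i' b) j)
            = ∏ j ∈ univ.filter (fun j : Fin n => (j:ℕ) < i), cw δ f x j := by
        intro b
        apply prod_congr rfl
        intro j hj
        simp only [mem_filter, mem_univ, true_and] at hj
        apply cw_congr
        intro k hk
        exact Function.update_of_ne (fun hc => by subst hc; simp [hi'def] at hk; omega) _ _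
      have hsplit' : PP δ f x i = PP δ f (Function.update x i' true) (i+1)
          + PP δ f (Function.update x i' false) (i+1) := hsplit
      rw [hsplit', h1, h0, hins, prod_insert hnm, prod_insert hnm,
          hprodcongr, hprodcongr, ← add_mul, cw_update_sum, one_mul]

lemma PP_succ (δ : ℝ) (f : (Fin n → Bool) → Bool) (x : Fin n → Bool) (i : Fin n) (b : Bool) :
    PP δ f (Function.update x i b) ((i:ℕ)+1)
      = cw δ f (Function.update x i b) i * PP δ f x (i:ℕ) := by
  have h1 := PP_eq_prod δ f (n - ((i:ℕ)+1)) (Function.update x i b) ((i:ℕ)+1) (by omega)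
  have h0 := PP_eq_prod δ f (n - (i:ℕ)) x (i:ℕ) (by omega)
  have hins := filter_lt_succ (n := n) (i:ℕ) i.isLt
  have hieq : (⟨(i:ℕ), i.isLt⟩ : Fin n) = i := by ext; rfl
  rw [hieq] at hins
  have hnm : i ∉ univ.filter (fun j : Fin n => (j:ℕ) < (i:ℕ)) := by simp
  have hprodcongr :
      (∏ j ∈ univ.filter (fun j : Fin n => (j:ℕ) < (i:ℕ)), cw δ f (Function.update x i b) j)
        = ∏ j ∈ univ.filter (fun j : Fin n => (j:ℕ) < (i:ℕ)), cw δ f x j := by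
    apply prod_congr rfl
    intro j hj
    simp only [mem_filter, mem_univ, true_and] at hj
    apply cw_congr
    intro k hk
    exact Function.update_of_ne (fun hc => by subst hc; omega) _ _
  rw [h1, h0, hins, prod_insert hnm, hprodcongr]


lemma scalar_key (δ a b M : ℝ) (hδ0 : 0 ≤ δ) (hδ : δ ≤ 1/2) (hba : b ≤ a) :
    (a+b) + 2*δ*min (a+b) (2*M - (a+b))
      ≤ 2*((1/2+δ)*(a + 2*δ*min a (M-a)) + (1/2-δ)*(b + 2*δ*min b (M-b))) := by
  have key1 : min (a+b) (2*M-(a+b)) ≤ (a-b) + 2*min a (M-a) := by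
    rcases min_cases a (M-a) with ⟨h1,h2⟩|⟨h1,h2⟩ <;> rw [h1]
    · calc min (a+b) (2*M-(a+b)) ≤ a+b := min_le_left _ _
        _ ≤ (a-b)+2*a := by linarith
    · calc min (a+b) (2*M-(a+b)) ≤ 2*M-(a+b) := min_le_right _ _
        _ ≤ (a-b)+2*(M-a) := by linarith
  have key2 : min (a+b) (2*M-(a+b)) ≤ (a-b) + 2*min b (M-b) := by
    rcases min_cases b (M-b) with ⟨h1,h2⟩|⟨h1,h2⟩ <;> rw [h1]
    · calc min (a+b) (2*M-(a+b)) ≤ a+b := min_le_left _ _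
        _ = (a-b)+2*b := by ring
    · calc min (a+b) (2*M-(a+b)) ≤ 2*M-(a+b) := min_le_right _ _
        _ ≤ (a-b)+2*(M-b) := by linarith
  have hcomb : min (min a (M-a)) (min b (M-b))
      ≤ (1/2+δ)*min a (M-a) + (1/2-δ)*min b (M-b) := by
    rcases le_total (min a (M-a)) (min b (M-b)) with h|h
    · rw [min_eq_left h]
      nlinarith [mul_nonneg (by linarith : (0:ℝ) ≤ 1/2-δ) (sub_nonneg.2 h)]
    · rw [min_eq_right h]
      nlinarith [mul_nonneg (by linarith : (0:ℝ) ≤ 1/2+δ) (sub_nonneg.2 h)]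
  have key3 : min (a+b) (2*M-(a+b)) ≤ (a-b) + 2*min (min a (M-a)) (min b (M-b)) := by
    rcases le_total (min a (M-a)) (min b (M-b)) with h|h
    · rw [min_eq_left h]; exact key1
    · rw [min_eq_right h]; exact key2
  have hfin : 0 ≤ (a-b) + 2*((1/2+δ)*min a (M-a) + (1/2-δ)*min b (M-b))
      - min (a+b) (2*M-(a+b)) := by linarith
  nlinarith [mul_nonneg hδ0 hfin]

lemma cw_nonneg (δ : ℝ) (f : (Fin n → Bool) → Bool) (x : Fin n → Bool) (i : Fin n)
    (hδ0 : 0 ≤ δ) (hδ : δ ≤ 1/2) : 0 ≤ cw δ f x i := by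
  unfold cw; split_ifs <;> linarith

lemma pw_nonneg (δ : ℝ) (f : (Fin n → Bool) → Bool) (x : Fin n → Bool)
    (hδ0 : 0 ≤ δ) (hδ : δ ≤ 1/2) : 0 ≤ pw δ f x :=
  prod_nonneg (fun i _ => cw_nonneg δ f x i hδ0 hδ)

lemma PP_nonneg (δ : ℝ) (f : (Fin n → Bool) → Bool) (x : Fin n → Bool) (i : ℕ)
    (hδ0 : 0 ≤ δ) (hδ : δ ≤ 1/2) : 0 ≤ PP δ f x i :=
  sum_nonneg (fun y _ => pw_nonneg δ f y hδ0 hδ)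

lemma nr_le_of_gb_true {f : (Fin n → Bool) → Bool} {x : Fin n → Bool} {i : Fin n}
    (h : gb f x i = true) :
    Nr f (Function.update x i false) ((i:ℕ)+1) ≤ Nr f (Function.update x i true) ((i:ℕ)+1) := by
  by_contra hc; simp [gb, hc] at h

lemma nr_le_of_gb_false {f : (Fin n → Bool) → Bool} {x : Fin n → Bool} {i : Fin n}
    (h : gb f x i = false) :
    Nr f (Function.update x i true) ((i:ℕ)+1) ≤ Nr f (Function.update x i false) ((i:ℕ)+1) := by
  have hc : ¬ (Nr f (Function.update x i false) ((i:ℕ)+1)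
      ≤ Nr f (Function.update x i true) ((i:ℕ)+1)) := by
    intro hle; simp [gb, hle] at h
  exact (not_le.mp hc).le

lemma main_ineq (δ : ℝ) (f : (Fin n → Bool) → Bool) (hδ0 : 0 ≤ δ) (hδ : δ ≤ 1/2) :
    ∀ d (x : Fin n → Bool) (i : ℕ), i + d = n →
      PP δ f x i * (Nr f x i + 2*δ*min (Nr f x i) ((2:ℝ)^d - Nr f x i))
        ≤ (2:ℝ)^d * FF δ f x i := by
  intro d
  induction d with
  | zero =>
    intro x i hi
    have hie : i = n := by omega
    rw [hie]
    have hP : PP δ f x n = pw δ f x := by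
      show (∑ y ∈ Pref x n, pw δ f y) = _; rw [Pref_top, sum_singleton]
    have hF : FF δ f x n = (if f x = true then pw δ f x else 0) := by
      show (∑ y ∈ Pref x n, _) = _; rw [Pref_top, sum_singleton]
    have hN : Nr f x n = (if f x = true then (1:ℝ) else 0) := by
      show (∑ y ∈ Pref x n, _) = _; rw [Pref_top, sum_singleton]
    rw [hP, hF, hN]
    by_cases hfx : f x = true <;> simp [hfx] <;> norm_num
  | succ d ih =>
    intro x i hi
    have hi' : i < n := by omega
    set i' : Fin n := ⟨i, hi'⟩ with hi'def
    set x1 := Function.update x i' true with hx1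
    set x0 := Function.update x i' false with hx0
    have hF : FF δ f x i = FF δ f x1 (i+1) + FF δ f x0 (i+1) :=
      sum_pref_split x i' (fun y => if f y = true then pw δ f y else 0)
    have hN : Nr f x i = Nr f x1 (i+1) + Nr f x0 (i+1) :=
      sum_pref_split x i' (fun y => if f y = true then (1:ℝ) else 0)
    have hP1 : PP δ f x1 (i+1) = cw δ f x1 i' * PP δ f x i := PP_succ δ f x i' true
    have hP0 : PP δ f x0 (i+1) = cw δ f x0 i' * PP δ f x i := PP_succ δ f x i' false
    have ih1 := ih x1 (i+1) (by omega)
    have ih0 := ih x0 (i+1) (by omega)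
    have hPn : 0 ≤ PP δ f x i := PP_nonneg δ f x i hδ0 hδ
    have hgb1 : gb f x1 i' = gb f x i' := gb_update f x i' true
    have hgb0 : gb f x0 i' = gb f x i' := gb_update f x i' false
    rw [hF, hN, pow_succ']
    cases hg : gb f x i' with
    | true =>
      have hc1 : cw δ f x1 i' = 1/2 + δ := by
        unfold cw; rw [hgb1, hg, hx1, Function.update_self, if_pos rfl]
      have hc0 : cw δ f x0 i' = 1/2 - δ := by
        unfold cw; rw [hgb0, hg, hx0, Function.update_self]; simp
      have hab : Nr f x0 (i+1) ≤ Nr f x1 (i+1) := nr_le_of_gb_true hg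
      have hsc := scalar_key δ (Nr f x1 (i+1)) (Nr f x0 (i+1)) ((2:ℝ)^d) hδ0 hδ hab
      have hm := mul_le_mul_of_nonneg_left hsc hPn
      rw [hP1, hc1] at ih1
      rw [hP0, hc0] at ih0
      nlinarith [ih1, ih0, hm]
    | false =>
      have hc1 : cw δ f x1 i' = 1/2 - δ := by
        unfold cw; rw [hgb1, hg, hx1, Function.update_self]; simp
      have hc0 : cw δ f x0 i' = 1/2 + δ := by
        unfold cw; rw [hgb0, hg, hx0, Function.update_self, if_pos rfl]
      have hab : Nr f x1 (i+1) ≤ Nr f x0 (i+1) := nr_le_of_gb_false hg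
      have hsc := scalar_key δ (Nr f x0 (i+1)) (Nr f x1 (i+1)) ((2:ℝ)^d) hδ0 hδ hab
      have hm := mul_le_mul_of_nonneg_left hsc hPn
      rw [hP1, hc1] at ih1
      rw [hP0, hc0] at ih0
      rw [add_comm (Nr f x1 (i+1)) (Nr f x0 (i+1))]
      nlinarith [ih1, ih0, hm]


lemma PP_zero (δ : ℝ) (f : (Fin n → Bool) → Bool) (x : Fin n → Bool) :
    PP δ f x 0 = 1 := by
  rw [PP_eq_prod δ f n x 0 (by omega)]
  have : (univ.filter (fun j : Fin n => (j:ℕ) < 0)) = ∅ := by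
    ext k; simp
  rw [this, prod_empty]

lemma sum_pw (δ : ℝ) (f : (Fin n → Bool) → Bool) : ∑ x, pw δ f x = 1 := by
  have := PP_zero δ f (fun _ => false)
  rwa [PP, Pref_zero] at this

lemma Nr_zero_const (f : (Fin n → Bool) → Bool) (x y : Fin n → Bool) :
    Nr f x 0 = Nr f y 0 := by
  rw [Nr, Nr, Pref_zero, Pref_zero]

lemma Nr_add_not (f : (Fin n → Bool) → Bool) (x : Fin n → Bool) :
    Nr f x 0 + Nr (fun y => !(f y)) x 0 = (2:ℝ)^n := by
  rw [Nr, Nr, Pref_zero, ← sum_add_distrib]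
  have h1 : ∀ y : Fin n → Bool,
      ((if f y = true then (1:ℝ) else 0) + (if (!(f y)) = true then (1:ℝ) else 0)) = 1 := by
    intro y; cases hy : f y <;> simp [hy]
  rw [sum_congr rfl (fun y _ => h1 y), sum_const, card_univ]
  simp [Fintype.card_fun]

lemma FF_ge (δ : ℝ) (f : (Fin n → Bool) → Bool) (hδ0 : 0 ≤ δ) (hδ : δ ≤ 1/2)
    (x : Fin n → Bool) (hN : (2:ℝ)^n ≤ 2 * Nr f x 0) :
    1/2 + δ ≤ FF δ f x 0 := by
  have hmain := main_ineq δ f hδ0 hδ n x 0 (by omega)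
  rw [PP_zero, one_mul] at hmain
  have hle : (2:ℝ)^n - Nr f x 0 ≤ Nr f x 0 := by linarith
  rw [min_eq_right hle] at hmain
  have h2n : (0:ℝ) < 2^n := pow_pos (by norm_num) n
  nlinarith [mul_nonneg (by linarith : (0:ℝ) ≤ 1 - 2*δ) (by linarith : (0:ℝ) ≤ 2 * Nr f x 0 - 2^n)]

/-- Master lemma: the full package for a function `g` with at least half ones. -/
lemma master (δ : ℝ) (hδ0 : 0 < δ) (hδ : δ ≤ 1/2) (g : (Fin n → Bool) → Bool)
    (hN : (2:ℝ)^n ≤ 2 * Nr g (fun _ => false) 0) :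
    (∀ x, 0 ≤ pw δ g x) ∧ (∑ x, pw δ g x = 1) ∧
    (∀ (i : Fin n) (pre : Fin n → Bool),
      (1/2 - δ) * (∑ x ∈ univ.filter (fun x => ∀ j : Fin n, (j : ℕ) < (i : ℕ) → x j = pre j), pw δ g x)
        ≤ (∑ x ∈ univ.filter
            (fun x => (∀ j : Fin n, (j : ℕ) < (i : ℕ) → x j = pre j) ∧ x i = true), pw δ g x) ∧
      (∑ x ∈ univ.filter
            (fun x => (∀ j : Fin n, (j : ℕ) < (i : ℕ) → x j = pre j) ∧ x i = true), pw δ g x)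
        ≤ (1/2 + δ) * (∑ x ∈ univ.filter (fun x => ∀ j : Fin n, (j : ℕ) < (i : ℕ) → x j = pre j), pw δ g x)) ∧
    (1/2 + δ ≤ ∑ x ∈ univ.filter (fun x => g x = true), pw δ g x) := by
  refine ⟨fun x => pw_nonneg δ g x hδ0.le hδ, sum_pw δ g, ?_, ?_⟩
  · intro i pre
    have hfe : univ.filter
        (fun x : Fin n → Bool => (∀ j : Fin n, (j : ℕ) < (i : ℕ) → x j = pre j) ∧ x i = true)
        = Pref (Function.update pre i true) ((i:ℕ)+1) := by
      rw [← filter_pref_eq pre i true, Pref, filter_filter]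
    have hnum : (∑ x ∈ univ.filter
        (fun x : Fin n → Bool => (∀ j : Fin n, (j : ℕ) < (i : ℕ) → x j = pre j) ∧ x i = true), pw δ g x)
        = cw δ g (Function.update pre i true) i * PP δ g pre (i:ℕ) := by
      rw [hfe]
      exact PP_succ δ g pre i true
    have hden : (∑ x ∈ univ.filter
        (fun x : Fin n → Bool => ∀ j : Fin n, (j : ℕ) < (i : ℕ) → x j = pre j), pw δ g x)
        = PP δ g pre (i:ℕ) := rfl
    have hPn : 0 ≤ PP δ g pre (i:ℕ) := PP_nonneg δ g pre _ hδ0.le hδ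
    have hcl : 1/2 - δ ≤ cw δ g (Function.update pre i true) i := by
      unfold cw; split_ifs <;> linarith
    have hcu : cw δ g (Function.update pre i true) i ≤ 1/2 + δ := by
      unfold cw; split_ifs <;> linarith
    rw [hnum, hden]
    exact ⟨mul_le_mul_of_nonneg_right hcl hPn, mul_le_mul_of_nonneg_right hcu hPn⟩
  · have := FF_ge δ g hδ0.le hδ (fun _ => false) hN
    rw [FF, Pref_zero, ← sum_filter] at this
    exact this

end SVX

open Finset in
/-- No deterministic extraction from Santha-Vazirani sources: for every
`δ ∈ (0,1/2]` and every `f : {0,1}^n → {0,1}` there is a `δ`-SV distribution `p`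
on which `f` is `δ`-biased. -/
theorem no_deterministic_sv_extraction (n : ℕ) (δ : ℝ) (hδ0 : 0 < δ) (hδ : δ ≤ 1/2)
    (f : (Fin n → Bool) → Bool) :
    ∃ p : (Fin n → Bool) → ℝ,
      (∀ x, 0 ≤ p x) ∧ (∑ x, p x = 1) ∧
      (∀ (i : Fin n) (pre : Fin n → Bool),
        (1/2 - δ) * (∑ x ∈ univ.filter (fun x => ∀ j : Fin n, (j : ℕ) < (i : ℕ) → x j = pre j), p x)
          ≤ (∑ x ∈ univ.filter
              (fun x => (∀ j : Fin n, (j : ℕ) < (i : ℕ) → x j = pre j) ∧ x i = true), p x) ∧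
        (∑ x ∈ univ.filter
              (fun x => (∀ j : Fin n, (j : ℕ) < (i : ℕ) → x j = pre j) ∧ x i = true), p x)
          ≤ (1/2 + δ) * (∑ x ∈ univ.filter (fun x => ∀ j : Fin n, (j : ℕ) < (i : ℕ) → x j = pre j), p x)) ∧
      ((1/2 + δ ≤ ∑ x ∈ univ.filter (fun x => f x = true), p x) ∨
       (∑ x ∈ univ.filter (fun x => f x = true), p x ≤ 1/2 - δ)) := by
  by_cases hN : (2:ℝ)^n ≤ 2 * SVX.Nr f (fun _ => false) 0
  · obtain ⟨h1, h2, h3, h4⟩ := SVX.master δ hδ0 hδ f hN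
    exact ⟨SVX.pw δ f, h1, h2, h3, Or.inl h4⟩
  · set g : (Fin n → Bool) → Bool := fun y => !(f y) with hg
    have hadd := SVX.Nr_add_not f (fun _ => false)
    have hNg : (2:ℝ)^n ≤ 2 * SVX.Nr g (fun _ => false) 0 := by
      push_neg at hN; linarith
    obtain ⟨h1, h2, h3, h4⟩ := SVX.master δ hδ0 hδ g hNg
    refine ⟨SVX.pw δ g, h1, h2, h3, Or.inr ?_⟩
    have hsplit := sum_filter_add_sum_filter_not univ (fun x => f x = true) (SVX.pw δ g)
    rw [h2] at hsplit
    have hfg : univ.filter (fun x : Fin n → Bool => ¬ (f x = true))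
        = univ.filter (fun x => g x = true) := by
      ext y; simp [hg]
    rw [hfg] at hsplit
    linarith
end

section
/- Let p be a joint distribution on (a,x) ∈ {0,1}² admitting an MDL-classical decomposition: p(a,x) = Σ_λ q(λ)·p(a|x,λ)·p(x|λ) with 1/2−δ ≤ p(x|λ) ≤ 1/2+δ and each behaviour p(·|·,λ) a convex combination of the six vertices of C_ω (listed with s = ω₀+ω₁ ≤ 1). If the observed value μ·(p(0,0)+p(1,1)) − (1/μ)·(p(1,0)+p(0,1)) is strictly less than B = (1/2−δ)·(μ+1/μ)·(1−s) − 1/μ (with μ = (1/4−δ²)ω₀ω₁ > 0), we get a contradiction; i.e., no such decomposition exists for p violating the bound. -/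
set_option maxHeartbeats 1600000 in
/-- Contrapositive of the MDL-like inequality: no MDL-classical decomposition
(with behaviours in the convex hull of the six vertices of `C_ω`) exists for a
joint distribution violating the bound `B_{ω,δ}`. -/
theorem mdl_violation_no_classical_model (δ ω₀ ω₁ : ℝ) (hδ0 : 0 ≤ δ) (hδ : δ < 1/2)
    (h0 : 0 < ω₀) (h1 : 0 < ω₁) (hs : ω₀ + ω₁ ≤ 1)
    (Λ : Type) [Fintype Λ] (q : Λ → ℝ) (hq0 : ∀ l, 0 ≤ q l) (hq1 : ∑ l, q l = 1)
    (pax : Λ → Fin 2 → Fin 2 → ℝ) (px : Λ → Fin 2 → ℝ)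
    (hvert : ∀ l, (pax l 0 0, pax l 1 0, pax l 0 1, pax l 1 1) ∈ convexHull ℝ
      ({(1, 0, 1, 0), (0, 1, 0, 1),
        (1, 0, 1 - (ω₀ + ω₁), ω₀ + ω₁), (0, 1, ω₀ + ω₁, 1 - (ω₀ + ω₁)),
        (1 - (ω₀ + ω₁), ω₀ + ω₁, 1, 0), (ω₀ + ω₁, 1 - (ω₀ + ω₁), 0, 1)} :
        Set (ℝ × ℝ × ℝ × ℝ)))
    (hpx : ∀ l x, 1/2 - δ ≤ px l x ∧ px l x ≤ 1/2 + δ)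
    (hpxn : ∀ l, px l 0 + px l 1 = 1)
    (p : Fin 2 → Fin 2 → ℝ)
    (hp : ∀ a x, p a x = ∑ l, q l * pax l a x * px l x)
    (μ : ℝ) (hμ : μ = (1/4 - δ^2) * ω₀ * ω₁)
    (hviol : μ * (p 0 0 + p 1 1) - (1/μ) * (p 1 0 + p 0 1)
      < (1/2 - δ) * (μ + 1/μ) * (1 - (ω₀ + ω₁)) - 1/μ) :
    False := by
  have hμpos : 0 < μ := by
    have h14 : 0 < 1/4 - δ^2 := by nlinarith
    rw [hμ]; exact mul_pos (mul_pos h14 h0) h1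
  obtain ⟨t, ht⟩ : ∃ x : ℝ, x = 1/μ := ⟨_, rfl⟩
  rw [← ht] at hviol
  have htpos : 0 < t := by rw [ht]; positivity
  obtain ⟨B, hB⟩ : ∃ x : ℝ, x = (1/2 - δ) * (μ + t) * (1 - (ω₀ + ω₁)) := ⟨_, rfl⟩
  rw [← hB] at hviol
  have hspos : 0 < ω₀ + ω₁ := by linarith
  have h1s : 0 ≤ 1 - (ω₀ + ω₁) := by linarith
  have h2δ : 0 ≤ 1/2 - δ := by linarith
  have hμtpos : 0 < μ + t := by linarith
  -- key per-λ bound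
  have key : ∀ l, B - t ≤ μ * (pax l 0 0 * px l 0 + pax l 1 1 * px l 1)
      - t * (pax l 1 0 * px l 0 + pax l 0 1 * px l 1) := by
    intro l
    obtain ⟨w0, hw0⟩ : ∃ x : ℝ, x = px l 0 := ⟨_, rfl⟩
    obtain ⟨w1, hw1⟩ : ∃ x : ℝ, x = px l 1 := ⟨_, rfl⟩
    rw [← hw0, ← hw1]
    have hw0l : 1/2 - δ ≤ w0 := hw0 ▸ (hpx l 0).1
    have hw0u : w0 ≤ 1/2 + δ := hw0 ▸ (hpx l 0).2
    have hwsum : w0 + w1 = 1 := by rw [hw0, hw1]; exact hpxn l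
    have hw1e : w1 = 1 - w0 := by linarith
    subst hw1e
    have hconv : Convex ℝ {v : ℝ × ℝ × ℝ × ℝ |
        B - t ≤ μ * (v.1 * w0 + v.2.2.2 * (1 - w0)) - t * (v.2.1 * w0 + v.2.2.1 * (1 - w0))} := by
      intro x hx y hy a b ha hb hab
      simp only [Set.mem_setOf_eq] at hx hy
      show B - t ≤ μ * ((a * x.1 + b * y.1) * w0 + (a * x.2.2.2 + b * y.2.2.2) * (1 - w0))
        - t * ((a * x.2.1 + b * y.2.1) * w0 + (a * x.2.2.1 + b * y.2.2.1) * (1 - w0))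
      have hab' : (a + b) * (B - t) = B - t := by rw [hab, one_mul]
      nlinarith [mul_le_mul_of_nonneg_left hx ha, mul_le_mul_of_nonneg_left hy hb]
    have P1 : 0 ≤ (μ + t) * (w0 - (1/2 - δ)) := mul_nonneg hμtpos.le (by linarith)
    have P2 : 0 ≤ (μ + t) * ((1/2 + δ) - w0) := mul_nonneg hμtpos.le (by linarith)
    have P3 : 0 ≤ (μ + t) * (ω₀ + ω₁) := mul_nonneg hμtpos.le hspos.le
    have P4 : 0 ≤ (μ + t) * (1/2 - δ) * (ω₀ + ω₁) :=
      mul_nonneg (mul_nonneg hμtpos.le h2δ) hspos.le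
    have P5 : 0 ≤ (1 - (ω₀ + ω₁)) * ((μ + t) * (w0 - (1/2 - δ))) := mul_nonneg h1s P1
    have P6 : 0 ≤ (1 - (ω₀ + ω₁)) * ((μ + t) * ((1/2 + δ) - w0)) := mul_nonneg h1s P2
    have hsub : ({(1, 0, 1, 0), (0, 1, 0, 1),
        (1, 0, 1 - (ω₀ + ω₁), ω₀ + ω₁), (0, 1, ω₀ + ω₁, 1 - (ω₀ + ω₁)),
        (1 - (ω₀ + ω₁), ω₀ + ω₁, 1, 0), (ω₀ + ω₁, 1 - (ω₀ + ω₁), 0, 1)} :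
        Set (ℝ × ℝ × ℝ × ℝ)) ⊆ {v : ℝ × ℝ × ℝ × ℝ |
        B - t ≤ μ * (v.1 * w0 + v.2.2.2 * (1 - w0)) - t * (v.2.1 * w0 + v.2.2.1 * (1 - w0))} := by
      intro v hv
      simp only [Set.mem_insert_iff, Set.mem_singleton_iff] at hv
      rcases hv with h | h | h | h | h | h <;> subst h
      · show B - t ≤ μ * (1 * w0 + 0 * (1 - w0)) - t * (0 * w0 + 1 * (1 - w0))
        nlinarith [P1, P4]
      · show B - t ≤ μ * (0 * w0 + 1 * (1 - w0)) - t * (1 * w0 + 0 * (1 - w0))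
        nlinarith [P2, P4]
      · show B - t ≤ μ * (1 * w0 + (ω₀ + ω₁) * (1 - w0))
          - t * (0 * w0 + (1 - (ω₀ + ω₁)) * (1 - w0))
        nlinarith [P5, P3]
      · show B - t ≤ μ * (0 * w0 + (1 - (ω₀ + ω₁)) * (1 - w0))
          - t * (1 * w0 + (ω₀ + ω₁) * (1 - w0))
        nlinarith [P6]
      · show B - t ≤ μ * ((1 - (ω₀ + ω₁)) * w0 + 0 * (1 - w0))
          - t * ((ω₀ + ω₁) * w0 + 1 * (1 - w0))
        nlinarith [P5]
      · show B - t ≤ μ * ((ω₀ + ω₁) * w0 + 1 * (1 - w0))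
          - t * ((1 - (ω₀ + ω₁)) * w0 + 0 * (1 - w0))
        nlinarith [P6, P3]
    exact convexHull_min hsub hconv (hvert l)
  -- sum up
  have hsum_eq : μ * (p 0 0 + p 1 1) - t * (p 1 0 + p 0 1)
      = ∑ l, q l * (μ * (pax l 0 0 * px l 0 + pax l 1 1 * px l 1)
          - t * (pax l 1 0 * px l 0 + pax l 0 1 * px l 1)) := by
    simp only [hp, Finset.mul_sum, ← Finset.sum_add_distrib, ← Finset.sum_sub_distrib]
    exact Finset.sum_congr rfl fun l _ => by ring
  have hge : B - t ≤ μ * (p 0 0 + p 1 1) - t * (p 1 0 + p 0 1) := by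
    rw [hsum_eq]
    calc B - t = ∑ l, q l * (B - t) := by rw [← Finset.sum_mul, hq1, one_mul]
      _ ≤ _ := Finset.sum_le_sum fun l _ => mul_le_mul_of_nonneg_left (key l) (hq0 l)
  linarith
end
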